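/- arXiv:2102.13484 — 5 statements merged into one kernel-verified Lean document; each statement's English description precedes it below -/
import Mathlib

section
/- Let φ(t,s) be smooth and positive with 0 < s < t, and set U = (sφ + s(t−s)φ_s)/φ and W = (φ_t + φ_s)/φ. Then the weakly Kähler equation (φ − sφ_s)(φ + (t−s)φ_s)(φ_s − φ_t + s(φ_st + φ_ss)) + s(t−s)φ_ss(φ(φ_s − φ_t) + sφ_s(φ_t + φ_s)) = 0 holds if and only if sU(U−t)W_s − s(U−t)U_s W − 2(U−s)U_s = 0. -/
open Real

/-- Partial derivative in the second variable `s`. -/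
noncomputable def dS (F : ℝ → ℝ → ℝ) (t s : ℝ) : ℝ := deriv (F t) s

/-- Partial derivative in the first variable `t`. -/
noncomputable def dT (F : ℝ → ℝ → ℝ) (t s : ℝ) : ℝ := deriv (fun u => F u s) t

/-- `U = (sφ + s(t−s)φ_s)/φ`. -/
noncomputable def Uf (φ : ℝ → ℝ → ℝ) (t s : ℝ) : ℝ :=
  (s * φ t s + s * (t - s) * dS φ t s) / φ t s

/-- `W = (φ_t + φ_s)/φ`. -/
noncomputable def Wf (φ : ℝ → ℝ → ℝ) (t s : ℝ) : ℝ :=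
  (dT φ t s + dS φ t s) / φ t s

/-- The region `0 < s < t` (with `p = (t, s)`). -/
def Reg : Set (ℝ × ℝ) := {p | 0 < p.2 ∧ p.2 < p.1}

/-- Left-hand side of the weakly Kähler equation. -/
noncomputable def WK (φ : ℝ → ℝ → ℝ) (t s : ℝ) : ℝ :=
  (φ t s - s * dS φ t s) * (φ t s + (t - s) * dS φ t s) *
    (dS φ t s - dT φ t s + s * (dT (dS φ) t s + dS (dS φ) t s)) +
  s * (t - s) * dS (dS φ) t s *
    (φ t s * (dS φ t s - dT φ t s) + s * dS φ t s * (dT φ t s + dS φ t s))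

lemma isOpen_Reg : IsOpen Reg := by
  have : Reg = {p : ℝ × ℝ | 0 < p.2} ∩ {p : ℝ × ℝ | p.2 < p.1} := rfl
  rw [this]
  exact (isOpen_lt continuous_const continuous_snd).inter
    (isOpen_lt continuous_snd continuous_fst)

lemma key_ratio (φ : ℝ → ℝ → ℝ)
    (hφ : ContDiffOn ℝ (⊤ : ℕ∞) (Function.uncurry φ) Reg)
    (hpos : ∀ t s : ℝ, 0 < s → s < t → 0 < φ t s)
    (t s : ℝ) (hs : 0 < s) (hst : s < t) :
    s * Uf φ t s * (Uf φ t s - t) * dS (Wf φ) t s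
      - s * (Uf φ t s - t) * dS (Uf φ) t s * Wf φ t s
      - 2 * (Uf φ t s - s) * dS (Uf φ) t s
    = s * (s - t) * WK φ t s / (φ t s) ^ 3 := by
  have hmem : (t, s) ∈ Reg := ⟨hs, hst⟩
  set Φ := Function.uncurry φ with hΦdef
  have hnbhd : Reg ∈ nhds (t, s) := isOpen_Reg.mem_nhds hmem
  have hca : ContDiffAt ℝ (⊤ : ℕ∞) Φ (t, s) := hφ.contDiffAt hnbhd
  set G : ℝ × ℝ → (ℝ × ℝ →L[ℝ] ℝ) := fderiv ℝ Φ with hGdef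
  have hGp : ∀ p ∈ Reg, HasFDerivAt Φ (G p) p := fun p hp =>
    ((hφ.contDiffAt (isOpen_Reg.mem_nhds hp)).differentiableAt (by simp)).hasFDerivAt
  -- first partials as HasDerivAt
  have hdS : ∀ p ∈ Reg, HasDerivAt (φ p.1) (G p (0, 1)) p.2 := by
    rintro ⟨u, v⟩ hp
    have hcurve : HasDerivAt (fun w : ℝ => ((u, w) : ℝ × ℝ)) (0, 1) v :=
      (hasDerivAt_const v u).prodMk (hasDerivAt_id v)
    exact (hGp (u, v) hp).comp_hasDerivAt v hcurve
  have hdT : ∀ p ∈ Reg, HasDerivAt (fun w => φ w p.2) (G p (1, 0)) p.1 := by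
    rintro ⟨u, v⟩ hp
    have hcurve : HasDerivAt (fun w : ℝ => ((w, v) : ℝ × ℝ)) (1, 0) u :=
      (hasDerivAt_id u).prodMk (hasDerivAt_const u v)
    exact (hGp (u, v) hp).comp_hasDerivAt u hcurve
  -- second derivative
  have hG1 : ContDiffOn ℝ 1 G Reg := hφ.fderiv_of_isOpen isOpen_Reg (by exact WithTop.coe_le_coe.mpr le_top)
  have hGd : DifferentiableAt ℝ G (t, s) :=
    (hG1.contDiffAt hnbhd).differentiableAt one_ne_zero
  set H := fderiv ℝ G (t, s) with hHdef
  have hGf : HasFDerivAt G H (t, s) := hGd.hasFDerivAt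
  have hEvalS : ∀ w : ℝ × ℝ, HasDerivAt (fun v => G (t, v) w) (H (0, 1) w) s := by
    intro w
    have hcurve : HasDerivAt (fun v : ℝ => ((t, v) : ℝ × ℝ)) (0, 1) s :=
      (hasDerivAt_const s t).prodMk (hasDerivAt_id s)
    have h1 := hGf.comp_hasDerivAt s hcurve
    exact (ContinuousLinearMap.apply ℝ ℝ w).hasFDerivAt.comp_hasDerivAt s h1
  have hEvalT : ∀ w : ℝ × ℝ, HasDerivAt (fun u => G (u, s) w) (H (1, 0) w) t := by
    intro w
    have hcurve : HasDerivAt (fun u : ℝ => ((u, s) : ℝ × ℝ)) (1, 0) t :=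
      (hasDerivAt_id t).prodMk (hasDerivAt_const t s)
    have h1 := hGf.comp_hasDerivAt t hcurve
    exact (ContinuousLinearMap.apply ℝ ℝ w).hasFDerivAt.comp_hasDerivAt t h1
  -- eventual membership
  have hevS : ∀ᶠ v in nhds s, (t, v) ∈ Reg := by
    have hc : ContinuousAt (fun v : ℝ => ((t, v) : ℝ × ℝ)) s :=
      (continuous_const.prodMk continuous_id).continuousAt
    exact hc.preimage_mem_nhds hnbhd
  have hevT : ∀ᶠ u in nhds t, (u, s) ∈ Reg := by
    have hc : ContinuousAt (fun u : ℝ => ((u, s) : ℝ × ℝ)) t :=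
      (continuous_id.prodMk continuous_const).continuousAt
    exact hc.preimage_mem_nhds hnbhd
  -- derivative of dS φ, dT φ in s
  have hDs2 : HasDerivAt (fun v => dS φ t v) (H (0, 1) (0, 1)) s := by
    refine (hEvalS (0, 1)).congr_of_eventuallyEq ?_
    filter_upwards [hevS] with v hv
    exact (hdS (t, v) hv).deriv
  have hDt2 : HasDerivAt (fun v => dT φ t v) (H (0, 1) (1, 0)) s := by
    refine (hEvalS (1, 0)).congr_of_eventuallyEq ?_
    filter_upwards [hevS] with v hv
    exact (hdT (t, v) hv).deriv
  -- derivative of dS φ in t, and symmetry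
  have hTdS : HasDerivAt (fun u => dS φ u s) (H (1, 0) (0, 1)) t := by
    refine (hEvalT (0, 1)).congr_of_eventuallyEq ?_
    filter_upwards [hevT] with u hu
    exact (hdS (u, s) hu).deriv
  have hsymm : IsSymmSndFDerivAt ℝ Φ (t, s) := hca.isSymmSndFDerivAt (by rw [minSmoothness_of_isRCLikeNormedField]; exact WithTop.coe_le_coe.mpr le_top)
  -- abbreviations
  set f := φ t s with hfdef
  set a := G (t, s) ((0 : ℝ), (1 : ℝ)) with hadef
  set b := G (t, s) ((1 : ℝ), (0 : ℝ)) with hbdef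
  set c := H (0, 1) (0, 1) with hcdef
  set m := H (0, 1) (1, 0) with hmdef
  have hfpos : 0 < f := hpos t s hs hst
  have hfne : f ≠ 0 := ne_of_gt hfpos
  have hφs : HasDerivAt (φ t) a s := hdS (t, s) hmem
  have ha : dS φ t s = a := hφs.deriv
  have hb : dT φ t s = b := (hdT (t, s) hmem).deriv
  have hc : dS (dS φ) t s = c := hDs2.deriv
  have hm : dS (dT φ) t s = m := hDt2.deriv
  have hm2 : dT (dS φ) t s = m := by
    have h1 : dT (dS φ) t s = H (1, 0) (0, 1) := hTdS.deriv
    have h2 : H (1, 0) (0, 1) = H (0, 1) (1, 0) := hsymm (1, 0) (0, 1)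
    rw [h1, h2]
  -- derivative of Uf in s
  have hU : HasDerivAt (Uf φ t)
      (((1 * f + s * a + ((1 * (t - s) + s * (0 - 1)) * dS φ t s
          + s * (t - s) * (H (0, 1) (0, 1)))) * f
        - (s * f + s * (t - s) * dS φ t s) * a) / f ^ 2) s := by
    have h1 : HasDerivAt (fun v : ℝ => v * φ t v) (1 * f + s * a) s :=
      (hasDerivAt_id s).mul hφs
    have h2 : HasDerivAt (fun v : ℝ => v * (t - v)) (1 * (t - s) + s * (0 - 1)) s :=
      (hasDerivAt_id s).mul ((hasDerivAt_const s t).sub (hasDerivAt_id s))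
    have h3 : HasDerivAt (fun v : ℝ => v * (t - v) * dS φ t v)
        ((1 * (t - s) + s * (0 - 1)) * dS φ t s + s * (t - s) * (H (0, 1) (0, 1))) s :=
      h2.mul hDs2
    exact (h1.add h3).div hφs hfne
  have hU' : dS (Uf φ) t s
      = (((1 * f + s * a + ((1 * (t - s) + s * (0 - 1)) * a + s * (t - s) * c)) * f
        - (s * f + s * (t - s) * a) * a) / f ^ 2) := by
    have h := hU.deriv
    rw [ha] at h
    exact h
  -- derivative of Wf in s
  have hW : HasDerivAt (Wf φ t)
      (((H (0, 1) (1, 0) + H (0, 1) (0, 1)) * f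
        - (dT φ t s + dS φ t s) * a) / f ^ 2) s :=
    (hDt2.add hDs2).div hφs hfne
  have hW' : dS (Wf φ) t s = ((m + c) * f - (b + a) * a) / f ^ 2 := by
    have h := hW.deriv
    rw [ha, hb] at h
    exact h
  have hUval : Uf φ t s = (s * f + s * (t - s) * a) / f := by
    rw [Uf, ha]
  have hWval : Wf φ t s = (b + a) / f := by
    rw [Wf, ha, hb]
  have hWKval : WK φ t s = (f - s * a) * (f + (t - s) * a) * (a - b + s * (m + c))
      + s * (t - s) * c * (f * (a - b) + s * a * (b + a)) := by
    rw [WK, ha, hb, hc, hm2]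
  rw [hU', hW', hUval, hWval, hWKval]
  field_simp
  ring

theorem stmt4 (φ : ℝ → ℝ → ℝ)
    (hφ : ContDiffOn ℝ (⊤ : ℕ∞) (Function.uncurry φ) Reg)
    (hpos : ∀ t s : ℝ, 0 < s → s < t → 0 < φ t s) :
    (∀ t s : ℝ, 0 < s → s < t → WK φ t s = 0) ↔
    (∀ t s : ℝ, 0 < s → s < t →
      s * Uf φ t s * (Uf φ t s - t) * dS (Wf φ) t s
        - s * (Uf φ t s - t) * dS (Uf φ) t s * Wf φ t s
        - 2 * (Uf φ t s - s) * dS (Uf φ) t s = 0) := by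
  constructor
  · intro h t s hs hst
    rw [key_ratio φ hφ hpos t s hs hst, h t s hs hst]
    simp
  · intro h t s hs hst
    have hE := key_ratio φ hφ hpos t s hs hst
    rw [h t s hs hst] at hE
    have hfne : (φ t s) ^ 3 ≠ 0 := pow_ne_zero 3 (ne_of_gt (hpos t s hs hst))
    have h0 : s * (s - t) * WK φ t s = 0 := by
      have := hE.symm
      rwa [div_eq_zero_iff, or_iff_left hfne] at this
    have hs0 : s ≠ 0 := ne_of_gt hs
    have hst0 : s - t ≠ 0 := by linarith
    have := mul_eq_zero.mp h0
    rcases this with h1 | h1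
    · exact absurd (mul_eq_zero.mp h1) (by simp [hs0, hst0])
    · exact h1
end

section
/- Let f : (0,∞) → ℝ be smooth and positive with f′ > 0, and define φ(t,s) = (√(f(t) + ((t f′(t) − f(t))/(2t))·s) + √(((t f′(t) + f(t))/(2t))·s))². Then for all (t,s) with 0 < s < t (and the quantity under the first square root positive), φ satisfies the weakly Kähler equation (φ − sφ_s)(φ + (t−s)φ_s)(φ_s − φ_t + s(φ_st + φ_ss)) + s(t−s)φ_ss(φ(φ_s − φ_t) + sφ_s(φ_t + φ_s)) = 0. -/
open Real

lemma sqrtD {g : ℝ → ℝ} {g' x : ℝ} (hg : HasDerivAt g g' x) (hx : 0 < g x) :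
    HasDerivAt (fun y => Real.sqrt (g y)) (g' / (2 * Real.sqrt (g x))) x := by
  have h := (Real.hasDerivAt_sqrt hx.ne').comp x hg
  refine h.congr_deriv ?_
  ring

lemma sD (A B C s : ℝ) (h1 : 0 < A + B * s) (h2 : 0 < C * s) :
    HasDerivAt (fun x : ℝ => (Real.sqrt (A + B * x) + Real.sqrt (C * x)) ^ 2)
      (2 * (Real.sqrt (A + B * s) + Real.sqrt (C * s)) *
        (B / (2 * Real.sqrt (A + B * s)) + C / (2 * Real.sqrt (C * s)))) s := by
  have hg1 : HasDerivAt (fun x : ℝ => A + B * x) B s := by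
    simpa using ((hasDerivAt_id s).const_mul B).const_add A
  have hg2 : HasDerivAt (fun x : ℝ => C * x) C s := by
    simpa using (hasDerivAt_id s).const_mul C
  have h := ((sqrtD hg1 h1).add (sqrtD hg2 h2)).pow 2
  refine h.congr_deriv ?_
  simp only [Pi.add_apply, Pi.div_apply, Pi.mul_apply, Pi.pow_apply, Pi.sub_apply, id]
  push_cast
  ring

lemma sD2 (A B C s : ℝ) (h1 : 0 < A + B * s) (h2 : 0 < C * s) :
    HasDerivAt (fun x : ℝ => 2 * (Real.sqrt (A + B * x) + Real.sqrt (C * x)) *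
        (B / (2 * Real.sqrt (A + B * x)) + C / (2 * Real.sqrt (C * x))))
      ((B / (2 * Real.sqrt (A + B * s)) + C / (2 * Real.sqrt (C * s))) *
          (B / Real.sqrt (A + B * s) + C / Real.sqrt (C * s)) -
        (Real.sqrt (A + B * s) + Real.sqrt (C * s)) *
          (B ^ 2 / (2 * Real.sqrt (A + B * s) ^ 3) + C ^ 2 / (2 * Real.sqrt (C * s) ^ 3))) s := by
  have hg1 : HasDerivAt (fun x : ℝ => A + B * x) B s := by
    simpa using ((hasDerivAt_id s).const_mul B).const_add A
  have hg2 : HasDerivAt (fun x : ℝ => C * x) C s := by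
    simpa using (hasDerivAt_id s).const_mul C
  have hu := sqrtD hg1 h1
  have hv := sqrtD hg2 h2
  have hune : Real.sqrt (A + B * s) ≠ 0 := (Real.sqrt_pos.2 h1).ne'
  have hvne : Real.sqrt (C * s) ≠ 0 := (Real.sqrt_pos.2 h2).ne'
  have hL := (hu.add hv).const_mul 2
  have hR1 := (hasDerivAt_const s B).div (hu.const_mul 2) (by positivity)
  have hR2 := (hasDerivAt_const s C).div (hv.const_mul 2) (by positivity)
  have h := hL.mul (hR1.add hR2)
  refine h.congr_deriv ?_
  simp only [Pi.add_apply, Pi.div_apply, Pi.mul_apply, Pi.pow_apply, Pi.sub_apply, id]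
  field_simp
  ring

lemma tD' {a b c : ℝ → ℝ} {a' b' c' t : ℝ} (s : ℝ)
    (ha : HasDerivAt a a' t) (hb : HasDerivAt b b' t) (hc : HasDerivAt c c' t)
    (h1 : 0 < a t + b t * s) (h2 : 0 < c t * s) :
    HasDerivAt (fun x => (Real.sqrt (a x + b x * s) + Real.sqrt (c x * s)) ^ 2)
      (2 * (Real.sqrt (a t + b t * s) + Real.sqrt (c t * s)) *
        ((a' + b' * s) / (2 * Real.sqrt (a t + b t * s)) +
          c' * s / (2 * Real.sqrt (c t * s)))) t := by
  have hr1 : HasDerivAt (fun x => a x + b x * s) (a' + b' * s) t := ha.add (hb.mul_const s)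
  have hr2 : HasDerivAt (fun x => c x * s) (c' * s) t := hc.mul_const s
  have h := ((sqrtD hr1 h1).add (sqrtD hr2 h2)).pow 2
  refine h.congr_deriv ?_
  simp only [Pi.add_apply, Pi.div_apply, Pi.mul_apply, Pi.pow_apply, Pi.sub_apply, id]
  push_cast
  ring

lemma tD2' {a b c : ℝ → ℝ} {a' b' c' t : ℝ} (s : ℝ)
    (ha : HasDerivAt a a' t) (hb : HasDerivAt b b' t) (hc : HasDerivAt c c' t)
    (h1 : 0 < a t + b t * s) (h2 : 0 < c t * s) :
    HasDerivAt (fun x => 2 * (Real.sqrt (a x + b x * s) + Real.sqrt (c x * s)) *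
        (b x / (2 * Real.sqrt (a x + b x * s)) + c x / (2 * Real.sqrt (c x * s))))
      (((a' + b' * s) / (2 * Real.sqrt (a t + b t * s)) +
          c' * s / (2 * Real.sqrt (c t * s))) *
          (b t / Real.sqrt (a t + b t * s) + c t / Real.sqrt (c t * s)) +
        (Real.sqrt (a t + b t * s) + Real.sqrt (c t * s)) *
          (b' / Real.sqrt (a t + b t * s) -
            b t * (a' + b' * s) / (2 * Real.sqrt (a t + b t * s) ^ 3) +
            c' / Real.sqrt (c t * s) -
            c t * (c' * s) / (2 * Real.sqrt (c t * s) ^ 3))) t := by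
  have hr1 : HasDerivAt (fun x => a x + b x * s) (a' + b' * s) t := ha.add (hb.mul_const s)
  have hr2 : HasDerivAt (fun x => c x * s) (c' * s) t := hc.mul_const s
  have hune : Real.sqrt (a t + b t * s) ≠ 0 := (Real.sqrt_pos.2 h1).ne'
  have hvne : Real.sqrt (c t * s) ≠ 0 := (Real.sqrt_pos.2 h2).ne'
  have hL := ((sqrtD hr1 h1).add (sqrtD hr2 h2)).const_mul 2
  have hR1 := hb.div ((sqrtD hr1 h1).const_mul 2) (by positivity)
  have hR2 := hc.div ((sqrtD hr2 h2).const_mul 2) (by positivity)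
  have h := hL.mul (hR1.add hR2)
  refine h.congr_deriv ?_
  simp only [Pi.add_apply, Pi.div_apply, Pi.mul_apply, Pi.pow_apply, Pi.sub_apply, id]
  generalize Real.sqrt (a t + b t * s) = u at hune ⊢
  generalize Real.sqrt (c t * s) = v at hvne ⊢
  field_simp
  ring

lemma hBmk {f : ℝ → ℝ} {t : ℝ} (htne : t ≠ 0) (hd1 : HasDerivAt f (deriv f t) t)
    (hd2 : HasDerivAt (deriv f) (deriv (deriv f) t) t) :
    HasDerivAt (fun x => (x * deriv f x - f x) / (2 * x))
      (deriv (deriv f) t / 2 - (t * deriv f t - f t) / (2 * t ^ 2)) t := by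
  have hnum := ((hasDerivAt_id t).mul hd2).sub hd1
  have hden : HasDerivAt (fun x : ℝ => 2 * x) 2 t := by
    simpa using (hasDerivAt_id t).const_mul 2
  have h := hnum.div hden (by simpa using htne)
  refine h.congr_deriv ?_
  simp only [Pi.add_apply, Pi.div_apply, Pi.mul_apply, Pi.pow_apply, Pi.sub_apply, id]
  field_simp
  ring

lemma hCmk {f : ℝ → ℝ} {t : ℝ} (htne : t ≠ 0) (hd1 : HasDerivAt f (deriv f t) t)
    (hd2 : HasDerivAt (deriv f) (deriv (deriv f) t) t) :
    HasDerivAt (fun x => (x * deriv f x + f x) / (2 * x))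
      (deriv (deriv f) t / 2 + (t * deriv f t - f t) / (2 * t ^ 2)) t := by
  have hnum := ((hasDerivAt_id t).mul hd2).add hd1
  have hden : HasDerivAt (fun x : ℝ => 2 * x) 2 t := by
    simpa using (hasDerivAt_id t).const_mul 2
  have h := hnum.div hden (by simpa using htne)
  refine h.congr_deriv ?_
  simp only [Pi.add_apply, Pi.div_apply, Pi.mul_apply, Pi.pow_apply, Pi.sub_apply, id]
  field_simp
  ring

set_option maxHeartbeats 4000000 in
lemma keyalg (u v t s F2 : ℝ)
    (hu : u ≠ 0) (hv : v ≠ 0) (ht : t ≠ 0) (hs0 : s ≠ 0) (hts : t - s ≠ 0)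
    (F F1 B C2 Bt Ct R1 R2 P PS PT PSS PST : ℝ)
    (hF : F = t * (u^2 - v^2) / (t - s))
    (hF1 : F1 = 2*v^2/s - (u^2-v^2)/(t-s))
    (hB : B = (t*F1 - F)/(2*t)) (hC : C2 = (t*F1+F)/(2*t))
    (hBt : Bt = F2/2 - (t*F1-F)/(2*t^2)) (hCt : Ct = F2/2 + (t*F1-F)/(2*t^2))
    (hR1 : R1 = F1 + Bt*s) (hR2 : R2 = Ct*s)
    (hP : P = (u+v)^2)
    (hPS : PS = 2*(u+v)*(B/(2*u)+C2/(2*v)))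
    (hPT : PT = 2*(u+v)*(R1/(2*u)+R2/(2*v)))
    (hPSS : PSS = (B/(2*u)+C2/(2*v))*(B/u+C2/v) - (u+v)*(B^2/(2*u^3)+C2^2/(2*v^3)))
    (hPST : PST = (R1/(2*u)+R2/(2*v))*(B/u+C2/v) +
      (u+v)*(Bt/u - B*R1/(2*u^3) + Ct/v - C2*R2/(2*v^3))) :
    (P - s*PS)*(P+(t-s)*PS)*(PS-PT+s*(PST+PSS)) +
      s*(t-s)*PSS*(P*(PS-PT)+s*PS*(PT+PS)) = 0 := by
  have cPS : PS = (v^3*t - u*v^2*s + 2*u*v^2*t - 2*u^2*v*s + u^2*v*t - u^3*s)/(u*s*(t-s)) := by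
    rw [hPS, hB, hC, hF1, hF]; field_simp; ring
  have cPT : PT = (-(v^2*t*s^3*F2) + v^2*t^2*s^2*F2 - 4*v^4*t*s + 4*v^4*t^2 - 2*u*v*t*s^3*F2
      + 2*u*v*t^2*s^2*F2 - 2*u*v^3*t*s + 4*u*v^3*t^2 - u^2*t*s^3*F2 + u^2*t^2*s^2*F2
      + 2*u^2*v^2*s^2 - 2*u^3*v*t*s - 2*u^4*s^2) / (2*u*v*t*s*(t-s)) := by
    rw [hPT, hR1, hR2, hBt, hCt, hF1, hF]; field_simp; ring
  have cPSS : PSS = -(t^2*v*(u-v)^2*(u+v)^2)/(2*u^3*s^2*(t-s)^2) := by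
    rw [hPSS, hB, hC, hF1, hF]; field_simp; ring
  have cPST : PST = (v^4*t^2*s^3*F2 - v^4*t^3*s^2*F2 + 4*v^6*t^2*s - 4*v^6*t^3
      + 2*u^2*v^2*t*s^4*F2 - 6*u^2*v^2*t^2*s^3*F2 + 4*u^2*v^2*t^3*s^2*F2
      + 2*u^2*v^4*t*s^2 - 4*u^2*v^4*t^2*s + 4*u^2*v^4*t^3 + 4*u^3*v*t*s^4*F2
      - 8*u^3*v*t^2*s^3*F2 + 4*u^3*v*t^3*s^2*F2 + 2*u^4*t*s^4*F2 - 3*u^4*t^2*s^3*F2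
      + u^4*t^3*s^2*F2 - 4*u^4*v^2*s^3 + 4*u^6*s^3 - 2*u^6*t*s^2)
      / (4*u^3*v*t*s^2*(t-s)^2) := by
    rw [hPST, hR1, hR2, hBt, hCt, hB, hC, hF1, hF]; field_simp; ring
  have e1 : P - s*PS = t*(u+v)^2*(u-v)/(u*(t-s)) := by
    rw [hP, cPS]; field_simp; ring
  have e2 : P + (t-s)*PS = t*v*(u+v)^2/(u*s) := by
    rw [hP, cPS]; field_simp; ring
  have e3 : PS - PT + s*(PST+PSS) =
      (v^4*t*s^3*F2 - v^4*t^2*s^2*F2 + 4*v^6*t*s - 6*v^6*t^2 - 2*u^2*v^2*t*s^3*F2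
        + 2*u^2*v^2*t^2*s^2*F2 - 6*u^2*v^4*s^2 + 8*u^2*v^4*t*s + 4*u^2*v^4*t^2
        + u^4*t*s^3*F2 - u^4*t^2*s^2*F2 + 4*u^4*v^2*s^2 - 12*u^4*v^2*t*s
        + 2*u^4*v^2*t^2 + 2*u^6*s^2) / (4*u^3*v*s*(t-s)^2) := by
    rw [cPS, cPT, cPST, cPSS]; field_simp; ring
  have e4 : P*(PS-PT)+s*PS*(PT+PS) =
      (-(v^5*t*s^3*F2) + v^5*t^2*s^2*F2 - 4*v^7*t*s + 6*v^7*t^2 - 3*u*v^4*t*s^3*F2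
        + 3*u*v^4*t^2*s^2*F2 - 12*u*v^6*t*s + 18*u*v^6*t^2 - 2*u^2*v^3*t*s^3*F2
        + 2*u^2*v^3*t^2*s^2*F2 + 6*u^2*v^5*s^2 - 24*u^2*v^5*t*s + 20*u^2*v^5*t^2
        + 2*u^3*v^2*t*s^3*F2 - 2*u^3*v^2*t^2*s^2*F2 + 18*u^3*v^4*s^2 - 40*u^3*v^4*t*s
        + 12*u^3*v^4*t^2 + 3*u^4*v*t*s^3*F2 - 3*u^4*v*t^2*s^2*F2 + 20*u^4*v^3*s^2
        - 36*u^4*v^3*t*s + 6*u^4*v^3*t^2 + u^5*t*s^3*F2 - u^5*t^2*s^2*F2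
        + 12*u^5*v^2*s^2 - 12*u^5*v^2*t*s + 2*u^5*v^2*t^2 + 6*u^6*v*s^2 + 2*u^7*s^2)
        / (2*u^2*v*s*(t-s)^2) := by
    rw [hP, cPS, cPT]; field_simp; ring
  rw [e3, e4, e1, e2, cPSS]
  field_simp
  ring

/-- explicit formula for the `s`-partial derivative of `φ` -/
noncomputable def GS (f : ℝ → ℝ) (t s : ℝ) : ℝ :=
  2 * (Real.sqrt (f t + (t * deriv f t - f t) / (2 * t) * s) +
      Real.sqrt ((t * deriv f t + f t) / (2 * t) * s)) *
    ((t * deriv f t - f t) / (2 * t) /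
        (2 * Real.sqrt (f t + (t * deriv f t - f t) / (2 * t) * s)) +
      (t * deriv f t + f t) / (2 * t) /
        (2 * Real.sqrt ((t * deriv f t + f t) / (2 * t) * s)))

set_option maxHeartbeats 4000000 in
theorem stmt5 (f : ℝ → ℝ)
    (hf : ContDiffOn ℝ (⊤ : ℕ∞) f (Set.Ioi 0))
    (hfpos : ∀ t : ℝ, 0 < t → 0 < f t)
    (hf'pos : ∀ t : ℝ, 0 < t → 0 < deriv f t)
    (φ : ℝ → ℝ → ℝ)
    (hφ : ∀ t s : ℝ, φ t s =
      (Real.sqrt (f t + (t * deriv f t - f t) / (2 * t) * s) +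
        Real.sqrt ((t * deriv f t + f t) / (2 * t) * s)) ^ 2)
    (t s : ℝ) (hs : 0 < s) (hst : s < t)
    (h1 : 0 < f t + (t * deriv f t - f t) / (2 * t) * s)
    (h2 : 0 < (t * deriv f t + f t) / (2 * t) * s) :
    WK φ t s = 0 := by
  have ht : (0:ℝ) < t := hs.trans hst
  have htne : t ≠ 0 := ht.ne'
  have hsne : s ≠ 0 := hs.ne'
  have htsne : t - s ≠ 0 := sub_ne_zero.2 hst.ne'
  have htmem : t ∈ Set.Ioi (0:ℝ) := ht
  have hnhds : Set.Ioi (0:ℝ) ∈ nhds t := isOpen_Ioi.mem_nhds ht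
  have hd1 : HasDerivAt f (deriv f t) t :=
    ((hf.differentiableOn (by simp)).differentiableAt hnhds).hasDerivAt
  have hdf : ContDiffOn ℝ (⊤ : ℕ∞) (deriv f) (Set.Ioi 0) :=
    hf.deriv_of_isOpen isOpen_Ioi (by simp)
  have hd2 : HasDerivAt (deriv f) (deriv (deriv f) t) t :=
    ((hdf.differentiableOn (by simp)).differentiableAt hnhds).hasDerivAt
  have hB := hBmk htne hd1 hd2
  have hC := hCmk htne hd1 hd2
  -- formula for dS φ everywhere the radicands are positive
  have hdSφ : ∀ t' s' : ℝ, 0 < f t' + (t' * deriv f t' - f t') / (2 * t') * s' →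
      0 < (t' * deriv f t' + f t') / (2 * t') * s' → dS φ t' s' = GS f t' s' := by
    intro t' s' p1 p2
    have hfun : φ t' = fun x => (Real.sqrt (f t' + (t' * deriv f t' - f t') / (2 * t') * x) +
        Real.sqrt ((t' * deriv f t' + f t') / (2 * t') * x)) ^ 2 := funext fun x => hφ t' x
    show deriv (φ t') s' = GS f t' s'
    rw [hfun]
    simp only [GS]
    exact (sD (f t') _ _ s' p1 p2).deriv
  have hφs : dS φ t s = GS f t s := hdSφ t s h1 h2
  -- t-derivative of φ
  have hφt : dT φ t s =
      2 * (Real.sqrt (f t + (t * deriv f t - f t) / (2 * t) * s) +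
          Real.sqrt ((t * deriv f t + f t) / (2 * t) * s)) *
        ((deriv f t + (deriv (deriv f) t / 2 - (t * deriv f t - f t) / (2 * t ^ 2)) * s) /
            (2 * Real.sqrt (f t + (t * deriv f t - f t) / (2 * t) * s)) +
          (deriv (deriv f) t / 2 + (t * deriv f t - f t) / (2 * t ^ 2)) * s /
            (2 * Real.sqrt ((t * deriv f t + f t) / (2 * t) * s))) := by
    show deriv (fun x => φ x s) t = _
    rw [show (fun x => φ x s) = fun x => (Real.sqrt (f x + (x * deriv f x - f x) / (2 * x) * s) +
        Real.sqrt ((x * deriv f x + f x) / (2 * x) * s)) ^ 2 from funext fun x => hφ x s]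
    exact (tD' s hd1 hB hC h1 h2).deriv
  -- second s-derivative
  have hφss : dS (dS φ) t s =
      ((t * deriv f t - f t) / (2 * t) /
            (2 * Real.sqrt (f t + (t * deriv f t - f t) / (2 * t) * s)) +
          (t * deriv f t + f t) / (2 * t) /
            (2 * Real.sqrt ((t * deriv f t + f t) / (2 * t) * s))) *
          ((t * deriv f t - f t) / (2 * t) / Real.sqrt (f t + (t * deriv f t - f t) / (2 * t) * s) +
            (t * deriv f t + f t) / (2 * t) / Real.sqrt ((t * deriv f t + f t) / (2 * t) * s)) -
        (Real.sqrt (f t + (t * deriv f t - f t) / (2 * t) * s) +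
            Real.sqrt ((t * deriv f t + f t) / (2 * t) * s)) *
          (((t * deriv f t - f t) / (2 * t)) ^ 2 /
              (2 * Real.sqrt (f t + (t * deriv f t - f t) / (2 * t) * s) ^ 3) +
            ((t * deriv f t + f t) / (2 * t)) ^ 2 /
              (2 * Real.sqrt ((t * deriv f t + f t) / (2 * t) * s) ^ 3)) := by
    show deriv (fun x => dS φ t x) s = _
    have hc1 : ContinuousAt (fun x : ℝ => f t + (t * deriv f t - f t) / (2 * t) * x) s := by
      fun_prop
    have hc2 : ContinuousAt (fun x : ℝ => (t * deriv f t + f t) / (2 * t) * x) s := by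
      fun_prop
    have hev : (fun x => dS φ t x) =ᶠ[nhds s] (fun x => GS f t x) := by
      filter_upwards [hc1.eventually (eventually_gt_nhds h1),
        hc2.eventually (eventually_gt_nhds h2)] with x p1 p2
      exact hdSφ t x p1 p2
    rw [hev.deriv_eq]
    have : (fun x => GS f t x) = fun x =>
        2 * (Real.sqrt (f t + (t * deriv f t - f t) / (2 * t) * x) +
            Real.sqrt ((t * deriv f t + f t) / (2 * t) * x)) *
          ((t * deriv f t - f t) / (2 * t) /
              (2 * Real.sqrt (f t + (t * deriv f t - f t) / (2 * t) * x)) +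
            (t * deriv f t + f t) / (2 * t) /
              (2 * Real.sqrt ((t * deriv f t + f t) / (2 * t) * x))) := by
      funext x; simp only [GS]
    rw [this]
    exact (sD2 (f t) _ _ s h1 h2).deriv
  -- mixed derivative
  have hφst : dT (dS φ) t s =
      ((deriv f t + (deriv (deriv f) t / 2 - (t * deriv f t - f t) / (2 * t ^ 2)) * s) /
            (2 * Real.sqrt (f t + (t * deriv f t - f t) / (2 * t) * s)) +
          (deriv (deriv f) t / 2 + (t * deriv f t - f t) / (2 * t ^ 2)) * s /
            (2 * Real.sqrt ((t * deriv f t + f t) / (2 * t) * s))) *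
          ((t * deriv f t - f t) / (2 * t) / Real.sqrt (f t + (t * deriv f t - f t) / (2 * t) * s) +
            (t * deriv f t + f t) / (2 * t) / Real.sqrt ((t * deriv f t + f t) / (2 * t) * s)) +
        (Real.sqrt (f t + (t * deriv f t - f t) / (2 * t) * s) +
            Real.sqrt ((t * deriv f t + f t) / (2 * t) * s)) *
          ((deriv (deriv f) t / 2 - (t * deriv f t - f t) / (2 * t ^ 2)) /
              Real.sqrt (f t + (t * deriv f t - f t) / (2 * t) * s) -
            (t * deriv f t - f t) / (2 * t) *
              (deriv f t + (deriv (deriv f) t / 2 - (t * deriv f t - f t) / (2 * t ^ 2)) * s) /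
              (2 * Real.sqrt (f t + (t * deriv f t - f t) / (2 * t) * s) ^ 3) +
            (deriv (deriv f) t / 2 + (t * deriv f t - f t) / (2 * t ^ 2)) /
              Real.sqrt ((t * deriv f t + f t) / (2 * t) * s) -
            (t * deriv f t + f t) / (2 * t) *
              ((deriv (deriv f) t / 2 + (t * deriv f t - f t) / (2 * t ^ 2)) * s) /
              (2 * Real.sqrt ((t * deriv f t + f t) / (2 * t) * s) ^ 3)) := by
    show deriv (fun x => dS φ x s) t = _
    have hr1c : ContinuousAt (fun x => f x + (x * deriv f x - f x) / (2 * x) * s) t :=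
      (hd1.add (hB.mul_const s)).continuousAt
    have hr2c : ContinuousAt (fun x => (x * deriv f x + f x) / (2 * x) * s) t :=
      (hC.mul_const s).continuousAt
    have hev : (fun x => dS φ x s) =ᶠ[nhds t] (fun x => GS f x s) := by
      filter_upwards [hr1c.eventually (eventually_gt_nhds h1),
        hr2c.eventually (eventually_gt_nhds h2)] with x p1 p2
      exact hdSφ x s p1 p2
    rw [hev.deriv_eq]
    have : (fun x => GS f x s) = fun x =>
        2 * (Real.sqrt (f x + (x * deriv f x - f x) / (2 * x) * s) +
            Real.sqrt ((x * deriv f x + f x) / (2 * x) * s)) *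
          ((x * deriv f x - f x) / (2 * x) /
              (2 * Real.sqrt (f x + (x * deriv f x - f x) / (2 * x) * s)) +
            (x * deriv f x + f x) / (2 * x) /
              (2 * Real.sqrt ((x * deriv f x + f x) / (2 * x) * s))) := by
      funext x; simp only [GS]
    rw [this]
    exact (tD2' s hd1 hB hC h1 h2).deriv
  -- final algebra
  have hune : Real.sqrt (f t + (t * deriv f t - f t) / (2 * t) * s) ≠ 0 :=
    (Real.sqrt_pos.2 h1).ne'
  have hvne : Real.sqrt ((t * deriv f t + f t) / (2 * t) * s) ≠ 0 :=
    (Real.sqrt_pos.2 h2).ne'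
  unfold WK
  rw [hφ t s, hφs, hφt, hφss, hφst]
  simp only [GS]
  set u := Real.sqrt (f t + (t * deriv f t - f t) / (2 * t) * s) with hud
  set v := Real.sqrt ((t * deriv f t + f t) / (2 * t) * s) with hvd
  have husq : u ^ 2 = f t + (t * deriv f t - f t) / (2 * t) * s := Real.sq_sqrt h1.le
  have hvsq : v ^ 2 = (t * deriv f t + f t) / (2 * t) * s := Real.sq_sqrt h2.le
  have hF : f t = t * (u^2 - v^2) / (t - s) := by
    rw [husq, hvsq]; field_simp; ring
  have hF1 : deriv f t = 2*v^2/s - (u^2-v^2)/(t-s) := by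
    rw [husq, hvsq]; field_simp; ring
  exact keyalg u v t s (deriv (deriv f) t) hune hvne htne hsne htsne (f t) (deriv f t)
    _ _ _ _ _ _ _ _ _ _ _ hF hF1 rfl rfl rfl rfl rfl rfl rfl rfl rfl rfl rfl
end

section
/- Let c > 0 and define φ(t,s) = c·(√t + √s)². Set U = (sφ + s(t−s)φ_s)/φ and W = (φ_t + φ_s)/φ. Then on the region 0 < s < t the quantity K := −(2/φ)·( s(W_t + W_s) − s²(t−s)·W_s²/U_s + W ) equals 0. -/
open Real

section Aux
variable {c : ℝ} {φ : ℝ → ℝ → ℝ}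

lemma l_dSφ (hc : 0 < c) (hφ : ∀ t s : ℝ, φ t s = c * (Real.sqrt t + Real.sqrt s) ^ 2) (t s : ℝ) (hs : 0 < s) :
    dS φ t s = c * (Real.sqrt t + Real.sqrt s) / Real.sqrt s := by
  have hq : (0:ℝ) < Real.sqrt s := Real.sqrt_pos.mpr hs
  have hφt : φ t = fun x => c * (Real.sqrt t + Real.sqrt x) ^ 2 := funext fun x => hφ t x
  have h : HasDerivAt (fun x => c * (Real.sqrt t + Real.sqrt x) ^ 2)
      (c * ((2:ℕ) * (Real.sqrt t + Real.sqrt s) ^ 1 * (0 + 1 / (2 * Real.sqrt s)))) s := by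
    exact (((hasDerivAt_const s (Real.sqrt t)).add (Real.hasDerivAt_sqrt hs.ne')).pow 2).const_mul c
  rw [dS, hφt, h.deriv]
  field_simp
  ring

lemma l_dTφ (hc : 0 < c) (hφ : ∀ t s : ℝ, φ t s = c * (Real.sqrt t + Real.sqrt s) ^ 2) (t s : ℝ) (ht : 0 < t) :
    dT φ t s = c * (Real.sqrt t + Real.sqrt s) / Real.sqrt t := by
  have hq : (0:ℝ) < Real.sqrt t := Real.sqrt_pos.mpr ht
  have hφs : (fun u => φ u s) = fun u => c * (Real.sqrt u + Real.sqrt s) ^ 2 :=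
    funext fun u => hφ u s
  have h : HasDerivAt (fun u => c * (Real.sqrt u + Real.sqrt s) ^ 2)
      (c * ((2:ℕ) * (Real.sqrt t + Real.sqrt s) ^ 1 * (1 / (2 * Real.sqrt t) + 0))) t := by
    exact (((Real.hasDerivAt_sqrt ht.ne').add (hasDerivAt_const t (Real.sqrt s))).pow 2).const_mul c
  rw [dT, hφs, h.deriv]
  field_simp
  ring

lemma l_W (hc : 0 < c) (hφ : ∀ t s : ℝ, φ t s = c * (Real.sqrt t + Real.sqrt s) ^ 2) (t s : ℝ) (ht : 0 < t) (hs : 0 < s) :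
    Wf φ t s = (Real.sqrt t * Real.sqrt s)⁻¹ := by
  have hr : (0:ℝ) < Real.sqrt t := Real.sqrt_pos.mpr ht
  have hq : (0:ℝ) < Real.sqrt s := Real.sqrt_pos.mpr hs
  rw [Wf, l_dSφ hc hφ t s hs, l_dTφ hc hφ t s ht, hφ t s]
  have hrq : Real.sqrt t + Real.sqrt s ≠ 0 := by positivity
  field_simp
  ring

lemma l_U (hc : 0 < c) (hφ : ∀ t s : ℝ, φ t s = c * (Real.sqrt t + Real.sqrt s) ^ 2) (t s : ℝ) (ht : 0 < t) (hs : 0 < s) :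
    Uf φ t s = Real.sqrt t * Real.sqrt s := by
  have hr : (0:ℝ) < Real.sqrt t := Real.sqrt_pos.mpr ht
  have hq : (0:ℝ) < Real.sqrt s := Real.sqrt_pos.mpr hs
  have hrq : Real.sqrt t + Real.sqrt s ≠ 0 := by positivity
  rw [Uf, l_dSφ hc hφ t s hs, hφ t s]
  set r := Real.sqrt t with hrd
  set q := Real.sqrt s with hqd
  rw [show t = r ^ 2 from (Real.sq_sqrt ht.le).symm,
      show s = q ^ 2 from (Real.sq_sqrt hs.le).symm]
  field_simp
  ring

lemma l_dSW (hc : 0 < c) (hφ : ∀ t s : ℝ, φ t s = c * (Real.sqrt t + Real.sqrt s) ^ 2) (t s : ℝ) (ht : 0 < t) (hs : 0 < s) :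
    dS (Wf φ) t s = -1 / (2 * Real.sqrt t * s * Real.sqrt s) := by
  have hr : (0:ℝ) < Real.sqrt t := Real.sqrt_pos.mpr ht
  have hq : (0:ℝ) < Real.sqrt s := Real.sqrt_pos.mpr hs
  have hev : Wf φ t =ᶠ[nhds s] fun x => (Real.sqrt t)⁻¹ * (Real.sqrt x)⁻¹ := by
    filter_upwards [eventually_gt_nhds hs] with x hx
    rw [l_W hc hφ t x ht hx, mul_inv]
  have h : HasDerivAt (fun x => (Real.sqrt t)⁻¹ * (Real.sqrt x)⁻¹)
      ((Real.sqrt t)⁻¹ * (-(1 / (2 * Real.sqrt s)) / Real.sqrt s ^ 2)) s :=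
    ((Real.hasDerivAt_sqrt hs.ne').inv hq.ne').const_mul _
  rw [dS, hev.deriv_eq, h.deriv, Real.sq_sqrt hs.le]
  field_simp

lemma l_dTW (hc : 0 < c) (hφ : ∀ t s : ℝ, φ t s = c * (Real.sqrt t + Real.sqrt s) ^ 2) (t s : ℝ) (ht : 0 < t) (hs : 0 < s) :
    dT (Wf φ) t s = -1 / (2 * Real.sqrt s * t * Real.sqrt t) := by
  have hr : (0:ℝ) < Real.sqrt t := Real.sqrt_pos.mpr ht
  have hq : (0:ℝ) < Real.sqrt s := Real.sqrt_pos.mpr hs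
  have hev : (fun u => Wf φ u s) =ᶠ[nhds t] fun u => (Real.sqrt s)⁻¹ * (Real.sqrt u)⁻¹ := by
    filter_upwards [eventually_gt_nhds ht] with u hu
    rw [l_W hc hφ u s hu hs, mul_inv, mul_comm]
  have h : HasDerivAt (fun u => (Real.sqrt s)⁻¹ * (Real.sqrt u)⁻¹)
      ((Real.sqrt s)⁻¹ * (-(1 / (2 * Real.sqrt t)) / Real.sqrt t ^ 2)) t :=
    ((Real.hasDerivAt_sqrt ht.ne').inv hr.ne').const_mul _
  rw [dT, hev.deriv_eq, h.deriv, Real.sq_sqrt ht.le]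
  field_simp

lemma l_dSU (hc : 0 < c) (hφ : ∀ t s : ℝ, φ t s = c * (Real.sqrt t + Real.sqrt s) ^ 2) (t s : ℝ) (ht : 0 < t) (hs : 0 < s) :
    dS (Uf φ) t s = Real.sqrt t / (2 * Real.sqrt s) := by
  have hev : Uf φ t =ᶠ[nhds s] fun x => Real.sqrt t * Real.sqrt x := by
    filter_upwards [eventually_gt_nhds hs] with x hx
    exact l_U hc hφ t x ht hx
  have h : HasDerivAt (fun x => Real.sqrt t * Real.sqrt x)
      (Real.sqrt t * (1 / (2 * Real.sqrt s))) s :=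
    (Real.hasDerivAt_sqrt hs.ne').const_mul _
  rw [dS, hev.deriv_eq, h.deriv]
  ring

end Aux

theorem stmt12 (c : ℝ) (hc : 0 < c)
    (φ : ℝ → ℝ → ℝ)
    (hφ : ∀ t s : ℝ, φ t s = c * (Real.sqrt t + Real.sqrt s) ^ 2)
    (t s : ℝ) (hs : 0 < s) (hst : s < t) :
    -(2 / φ t s) *
      (s * (dT (Wf φ) t s + dS (Wf φ) t s)
        - s ^ 2 * (t - s) * (dS (Wf φ) t s) ^ 2 / dS (Uf φ) t s
        + Wf φ t s) = 0 := by
  have ht : 0 < t := hs.trans hst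
  have hr : (0:ℝ) < Real.sqrt t := Real.sqrt_pos.mpr ht
  have hq : (0:ℝ) < Real.sqrt s := Real.sqrt_pos.mpr hs
  rw [l_dSW hc hφ t s ht hs, l_dTW hc hφ t s ht hs,
    l_dSU hc hφ t s ht hs, l_W hc hφ t s ht hs]
  have key : s * (-1 / (2 * Real.sqrt s * t * Real.sqrt t) + -1 / (2 * Real.sqrt t * s * Real.sqrt s))
      - s ^ 2 * (t - s) * (-1 / (2 * Real.sqrt t * s * Real.sqrt s)) ^ 2
        / (Real.sqrt t / (2 * Real.sqrt s))
      + (Real.sqrt t * Real.sqrt s)⁻¹ = 0 := by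
    set r := Real.sqrt t with hrd
    set q := Real.sqrt s with hqd
    rw [show t = r ^ 2 from (Real.sq_sqrt ht.le).symm,
        show s = q ^ 2 from (Real.sq_sqrt hs.le).symm]
    field_simp
    ring
  rw [key, mul_zero]
end

section
/- Let c > 0 and define φ(t,s) = (√(t/(c²+t²) − t²s/(c²+t²)²) + √(c²s/(c²+t²)²))². Set U = (sφ + s(t−s)φ_s)/φ and W = (φ_t + φ_s)/φ. Then on the region 0 < s < t the quantity K := −(2/φ)·( s(W_t + W_s) − s²(t−s)·W_s²/U_s + W ) equals 4. -/
open Real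

/-! ### Auxiliary definitions -/

noncomputable def pEx (c t s : ℝ) : ℝ :=
  Real.sqrt (t / (c ^ 2 + t ^ 2) - t ^ 2 * s / (c ^ 2 + t ^ 2) ^ 2)

noncomputable def qEx (c t s : ℝ) : ℝ :=
  Real.sqrt (c ^ 2 * s / (c ^ 2 + t ^ 2) ^ 2)

noncomputable def phiEx (c : ℝ) : ℝ → ℝ → ℝ := fun t s => (pEx c t s + qEx c t s) ^ 2

noncomputable def aEx (c t s : ℝ) : ℝ := Real.sqrt (t * (c ^ 2 + t ^ 2) - t ^ 2 * s)

noncomputable def bEx (c s : ℝ) : ℝ := Real.sqrt (c ^ 2 * s)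

noncomputable def rEx (c t s : ℝ) : ℝ :=
  Real.sqrt (c ^ 2 * s * t * (c ^ 2 + t ^ 2 - t * s))

noncomputable def WclF (c : ℝ) : ℝ → ℝ → ℝ := fun t s =>
  (rEx c t s * ((c ^ 2 + t ^ 2 - t * s) - t * s) - 2 * t ^ 2 * s * (c ^ 2 + t ^ 2 - t * s)) /
    (t * s * (c ^ 2 + t ^ 2) * (c ^ 2 + t ^ 2 - t * s))

noncomputable def UclF (c : ℝ) : ℝ → ℝ → ℝ := fun t s =>
  rEx c t s / (c ^ 2 + t ^ 2 - t * s)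

/-! ### Basic positivity facts -/

lemma m_pos {c t s : ℝ} (hc : 0 < c) (hs : 0 < s) (hst : s < t) :
    0 < c ^ 2 + t ^ 2 - t * s := by nlinarith [mul_pos (hs.trans hst) (sub_pos.2 hst)]

lemma P_eq (c t s : ℝ) (hA : (0:ℝ) < c ^ 2 + t ^ 2) :
    t / (c ^ 2 + t ^ 2) - t ^ 2 * s / (c ^ 2 + t ^ 2) ^ 2
      = t * (c ^ 2 + t ^ 2 - t * s) / (c ^ 2 + t ^ 2) ^ 2 := by
  field_simp

lemma P_pos {c t s : ℝ} (hc : 0 < c) (hs : 0 < s) (hst : s < t) :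
    0 < t / (c ^ 2 + t ^ 2) - t ^ 2 * s / (c ^ 2 + t ^ 2) ^ 2 := by
  have ht : 0 < t := hs.trans hst
  have hA : (0:ℝ) < c ^ 2 + t ^ 2 := by positivity
  rw [P_eq c t s hA]
  exact div_pos (mul_pos ht (m_pos hc hs hst)) (by positivity)

lemma Q_pos {c t s : ℝ} (hc : 0 < c) (hs : 0 < s) (ht : 0 < t) :
    0 < c ^ 2 * s / (c ^ 2 + t ^ 2) ^ 2 :=
  div_pos (mul_pos (pow_pos hc 2) hs) (pow_pos (by positivity) 2)

lemma g_pos {c t s : ℝ} (hc : 0 < c) (hs : 0 < s) (hst : s < t) :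
    0 < c ^ 2 * s * t * (c ^ 2 + t ^ 2 - t * s) := by
  have ht : 0 < t := hs.trans hst
  exact mul_pos (mul_pos (mul_pos (pow_pos hc 2) hs) ht) (m_pos hc hs hst)

lemma pEx_pos {c t s : ℝ} (hc : 0 < c) (hs : 0 < s) (hst : s < t) : 0 < pEx c t s :=
  Real.sqrt_pos.2 (P_pos hc hs hst)

lemma qEx_pos {c t s : ℝ} (hc : 0 < c) (hs : 0 < s) (ht : 0 < t) : 0 < qEx c t s :=
  Real.sqrt_pos.2 (Q_pos hc hs ht)

lemma aEx_pos {c t s : ℝ} (hc : 0 < c) (hs : 0 < s) (hst : s < t) : 0 < aEx c t s := by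
  apply Real.sqrt_pos.2
  have := m_pos hc hs hst
  have ht : 0 < t := hs.trans hst
  nlinarith

lemma bEx_pos {c s : ℝ} (hc : 0 < c) (hs : 0 < s) : 0 < bEx c s :=
  Real.sqrt_pos.2 (mul_pos (pow_pos hc 2) hs)

lemma rEx_pos {c t s : ℝ} (hc : 0 < c) (hs : 0 < s) (hst : s < t) : 0 < rEx c t s :=
  Real.sqrt_pos.2 (g_pos hc hs hst)

lemma pEx_eq {c t s : ℝ} (hc : 0 < c) (hs : 0 < s) (hst : s < t) :
    pEx c t s = aEx c t s / (c ^ 2 + t ^ 2) := by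
  have ht : 0 < t := hs.trans hst
  have hA : (0:ℝ) < c ^ 2 + t ^ 2 := by positivity
  rw [pEx, aEx, P_eq c t s hA, show t * (c ^ 2 + t ^ 2 - t * s) = t * (c ^ 2 + t ^ 2) - t ^ 2 * s by ring,
    Real.sqrt_div (by nlinarith [mul_pos ht (m_pos hc hs hst)]), Real.sqrt_sq hA.le]

lemma qEx_eq {c t s : ℝ} (hc : 0 < c) (hs : 0 ≤ s) (ht : 0 < t) :
    qEx c t s = bEx c s / (c ^ 2 + t ^ 2) := by
  have hA : (0:ℝ) < c ^ 2 + t ^ 2 := by positivity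
  rw [qEx, bEx, Real.sqrt_div (mul_nonneg (by positivity) hs), Real.sqrt_sq hA.le]

lemma rEx_eq {c t s : ℝ} (hc : 0 < c) (hs : 0 < s) (hst : s < t) :
    rEx c t s = aEx c t s * bEx c s := by
  have ht : 0 < t := hs.trans hst
  rw [rEx, aEx, bEx, ← Real.sqrt_mul (by nlinarith [mul_pos ht (m_pos hc hs hst)])]
  congr 1; ring

lemma aEx_sq {c t s : ℝ} (hc : 0 < c) (hs : 0 < s) (hst : s < t) :
    aEx c t s ^ 2 = t * (c ^ 2 + t ^ 2) - t ^ 2 * s := by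
  have ht : 0 < t := hs.trans hst
  exact Real.sq_sqrt (by nlinarith [mul_pos ht (m_pos hc hs hst)])

lemma bEx_sq {c s : ℝ} (hs : 0 ≤ s) : bEx c s ^ 2 = c ^ 2 * s :=
  Real.sq_sqrt (by positivity)

lemma rEx_sq {c t s : ℝ} (hc : 0 < c) (hs : 0 < s) (hst : s < t) :
    rEx c t s ^ 2 = c ^ 2 * s * t * (c ^ 2 + t ^ 2 - t * s) :=
  Real.sq_sqrt (g_pos hc hs hst).le

/-! ### First level derivatives -/

lemma hasDerivAt_phi_s {c t s : ℝ} (hc : 0 < c) (hs : 0 < s) (hst : s < t) :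
    HasDerivAt (phiEx c t)
      (2 * (pEx c t s + qEx c t s) *
        (-(t ^ 2 / (c ^ 2 + t ^ 2) ^ 2) / (2 * pEx c t s)
          + c ^ 2 / (c ^ 2 + t ^ 2) ^ 2 / (2 * qEx c t s))) s := by
  have ht : 0 < t := hs.trans hst
  have hP : HasDerivAt (fun x => t / (c ^ 2 + t ^ 2) - t ^ 2 * x / (c ^ 2 + t ^ 2) ^ 2)
      (-(t ^ 2 / (c ^ 2 + t ^ 2) ^ 2)) s := by
    have h := (((hasDerivAt_id s).const_mul (t ^ 2)).div_const ((c ^ 2 + t ^ 2) ^ 2)).const_sub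
      (t / (c ^ 2 + t ^ 2))
    refine h.congr_deriv ?_; ring
  have hQ : HasDerivAt (fun x => c ^ 2 * x / (c ^ 2 + t ^ 2) ^ 2)
      (c ^ 2 / (c ^ 2 + t ^ 2) ^ 2) s := by
    have h := ((hasDerivAt_id s).const_mul (c ^ 2)).div_const ((c ^ 2 + t ^ 2) ^ 2)
    refine h.congr_deriv ?_; ring
  have hp := hP.sqrt (ne_of_gt (P_pos hc hs hst))
  have hq := hQ.sqrt (ne_of_gt (Q_pos hc hs ht))
  have h := (hp.fun_add hq).fun_pow 2
  refine h.congr_deriv ?_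
  simp only [pEx, qEx, pow_one, Nat.cast_ofNat]
  push_cast
  ring

lemma hasDerivAt_phi_t {c t s : ℝ} (hc : 0 < c) (hs : 0 < s) (hst : s < t) :
    HasDerivAt (fun u => phiEx c u s)
      (2 * (pEx c t s + qEx c t s) *
        ((c ^ 2 - t ^ 2) * (c ^ 2 + t ^ 2 - 2 * t * s) / (c ^ 2 + t ^ 2) ^ 3 / (2 * pEx c t s)
          + -(4 * c ^ 2 * s * t) / (c ^ 2 + t ^ 2) ^ 3 / (2 * qEx c t s))) t := by
  have ht : 0 < t := hs.trans hst
  have hA : (0:ℝ) < c ^ 2 + t ^ 2 := by positivity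
  have hden : HasDerivAt (fun u : ℝ => c ^ 2 + u ^ 2) (2 * t) t := by
    have h := (hasDerivAt_pow 2 t).const_add (c ^ 2)
    refine h.congr_deriv ?_; ring
  have hden2 : HasDerivAt (fun u : ℝ => (c ^ 2 + u ^ 2) ^ 2) (2 * (c ^ 2 + t ^ 2) * (2 * t)) t := by
    have h := hden.fun_pow 2
    refine h.congr_deriv ?_; ring
  have h1 : HasDerivAt (fun u : ℝ => u / (c ^ 2 + u ^ 2))
      ((1 * (c ^ 2 + t ^ 2) - t * (2 * t)) / (c ^ 2 + t ^ 2) ^ 2) t :=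
    (hasDerivAt_id t).fun_div hden (ne_of_gt hA)
  have h2 : HasDerivAt (fun u : ℝ => u ^ 2 * s) (2 * t * s) t := by
    have h := (hasDerivAt_pow 2 t).mul_const s
    refine h.congr_deriv ?_; ring
  have h4 : HasDerivAt (fun u : ℝ => u ^ 2 * s / (c ^ 2 + u ^ 2) ^ 2)
      ((2 * t * s * (c ^ 2 + t ^ 2) ^ 2 - t ^ 2 * s * (2 * (c ^ 2 + t ^ 2) * (2 * t)))
        / ((c ^ 2 + t ^ 2) ^ 2) ^ 2) t :=
    h2.fun_div hden2 (by positivity)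
  have hPt : HasDerivAt (fun u => u / (c ^ 2 + u ^ 2) - u ^ 2 * s / (c ^ 2 + u ^ 2) ^ 2)
      ((c ^ 2 - t ^ 2) * (c ^ 2 + t ^ 2 - 2 * t * s) / (c ^ 2 + t ^ 2) ^ 3) t := by
    have h := h1.fun_sub h4
    refine h.congr_deriv ?_
    field_simp
    ring
  have hQt : HasDerivAt (fun u => c ^ 2 * s / (c ^ 2 + u ^ 2) ^ 2)
      (-(4 * c ^ 2 * s * t) / (c ^ 2 + t ^ 2) ^ 3) t := by
    have h := (hasDerivAt_const t (c ^ 2 * s)).fun_div hden2 (by positivity)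
    refine h.congr_deriv ?_
    field_simp
    ring
  have hp := hPt.sqrt (ne_of_gt (P_pos hc hs hst))
  have hq := hQt.sqrt (ne_of_gt (Q_pos hc hs ht))
  have h := (hp.fun_add hq).fun_pow 2
  refine h.congr_deriv ?_
  simp only [pEx, qEx, pow_one, Nat.cast_ofNat]
  push_cast
  ring

/-! ### Closed forms for W and U -/

set_option maxHeartbeats 4000000 in
lemma W_eq {c t s : ℝ} (hc : 0 < c) (hs : 0 < s) (hst : s < t) :
    Wf (phiEx c) t s = WclF c t s := by
  have ht : 0 < t := hs.trans hst
  have hA : (0:ℝ) < c ^ 2 + t ^ 2 := by positivity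
  have hm := m_pos hc hs hst
  have hdS : dS (phiEx c) t s = 2 * (pEx c t s + qEx c t s) *
      (-(t ^ 2 / (c ^ 2 + t ^ 2) ^ 2) / (2 * pEx c t s)
        + c ^ 2 / (c ^ 2 + t ^ 2) ^ 2 / (2 * qEx c t s)) :=
    (hasDerivAt_phi_s hc hs hst).deriv
  have hdT : dT (phiEx c) t s = 2 * (pEx c t s + qEx c t s) *
      ((c ^ 2 - t ^ 2) * (c ^ 2 + t ^ 2 - 2 * t * s) / (c ^ 2 + t ^ 2) ^ 3 / (2 * pEx c t s)
        + -(4 * c ^ 2 * s * t) / (c ^ 2 + t ^ 2) ^ 3 / (2 * qEx c t s)) :=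
    (hasDerivAt_phi_t hc hs hst).deriv
  have ha := aEx_pos hc hs hst
  have hb := bEx_pos hc hs
  have ha2 := aEx_sq hc hs hst
  have hb2 := bEx_sq (c := c) hs.le
  rw [Wf, hdS, hdT, WclF, rEx_eq hc hs hst, show phiEx c t s = (pEx c t s + qEx c t s) ^ 2 from rfl,
    pEx_eq hc hs hst, qEx_eq hc hs.le ht]
  set a := aEx c t s with hadef
  set b := bEx c s with hbdef
  have hab : 0 < a + b := add_pos ha hb
  have ha0 : a ≠ 0 := ne_of_gt ha
  have hb0 : b ≠ 0 := ne_of_gt hb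
  have hab0 : a + b ≠ 0 := ne_of_gt hab
  have hs0 : s ≠ 0 := ne_of_gt hs
  have ht0 : t ≠ 0 := ne_of_gt ht
  have hA0 : (c ^ 2 + t ^ 2) ≠ 0 := ne_of_gt hA
  have hm0 : (c ^ 2 + t ^ 2 - t * s) ≠ 0 := ne_of_gt hm
  field_simp
  linear_combination (-1 * a * b ^ 2 * c ^ 2 + 2 * a * b ^ 2 * s * t + -1 * a * b ^ 2 * t ^ 2 + -1 * b ^ 3 * c ^ 2 + 2 * b ^ 3 * s * t + -1 * b ^ 3 * t ^ 2 + 2 * b * c ^ 2 * s * t ^ 2 + -2 * b * s ^ 2 * t ^ 3 + 2 * b * s * t ^ 4) * ha2 + (-1 * a * c ^ 4 * t + 5 * a * c ^ 2 * s * t ^ 2 + -2 * a * c ^ 2 * t ^ 3 + -4 * a * s ^ 2 * t ^ 3 + 5 * a * s * t ^ 4 + -1 * a * t ^ 5 + -1 * b * c ^ 4 * t + 3 * b * c ^ 2 * s * t ^ 2 + -2 * b * c ^ 2 * t ^ 3 + -2 * b * s ^ 2 * t ^ 3 + 3 * b * s * t ^ 4 + -1 * b * t ^ 5) * hb2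

set_option maxHeartbeats 4000000 in
lemma U_eq {c t s : ℝ} (hc : 0 < c) (hs : 0 < s) (hst : s < t) :
    Uf (phiEx c) t s = UclF c t s := by
  have ht : 0 < t := hs.trans hst
  have hA : (0:ℝ) < c ^ 2 + t ^ 2 := by positivity
  have hm := m_pos hc hs hst
  have hdS : dS (phiEx c) t s = 2 * (pEx c t s + qEx c t s) *
      (-(t ^ 2 / (c ^ 2 + t ^ 2) ^ 2) / (2 * pEx c t s)
        + c ^ 2 / (c ^ 2 + t ^ 2) ^ 2 / (2 * qEx c t s)) :=
    (hasDerivAt_phi_s hc hs hst).deriv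
  have ha := aEx_pos hc hs hst
  have hb := bEx_pos hc hs
  have ha2 := aEx_sq hc hs hst
  have hb2 := bEx_sq (c := c) hs.le
  rw [Uf, hdS, UclF, rEx_eq hc hs hst, show phiEx c t s = (pEx c t s + qEx c t s) ^ 2 from rfl,
    pEx_eq hc hs hst, qEx_eq hc hs.le ht]
  set a := aEx c t s with hadef
  set b := bEx c s with hbdef
  have hab : 0 < a + b := add_pos ha hb
  have ha0 : a ≠ 0 := ne_of_gt ha
  have hb0 : b ≠ 0 := ne_of_gt hb
  have hab0 : a + b ≠ 0 := ne_of_gt hab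
  have hs0 : s ≠ 0 := ne_of_gt hs
  have ht0 : t ≠ 0 := ne_of_gt ht
  have hA0 : (c ^ 2 + t ^ 2) ≠ 0 := ne_of_gt hA
  have hm0 : (c ^ 2 + t ^ 2 - t * s) ≠ 0 := ne_of_gt hm
  field_simp
  rw [eq_div_iff (show c ^ 2 + t ^ 2 - s * t ≠ 0 by rw [mul_comm s t]; exact hm0)]
  linear_combination (-1 * a * b ^ 2 + -1 * b ^ 3 + 1 * b * c ^ 2 * s + -1 * b * s ^ 2 * t + 1 * b * s * t ^ 2) * ha2 + (1 * a * c ^ 2 * s + -1 * a * c ^ 2 * t + -1 * a * s ^ 2 * t + 2 * a * s * t ^ 2 + -1 * a * t ^ 3 + -1 * b * c ^ 2 * t + 1 * b * s * t ^ 2 + -1 * b * t ^ 3) * hb2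

/-! ### Second level derivatives -/

lemma hasDerivAt_r_s {c t s : ℝ} (hc : 0 < c) (hs : 0 < s) (hst : s < t) :
    HasDerivAt (fun x => rEx c t x)
      ((c ^ 2 * t * (c ^ 2 + t ^ 2) - 2 * c ^ 2 * t ^ 2 * s) / (2 * rEx c t s)) s := by
  have hg : HasDerivAt (fun x : ℝ => c ^ 2 * x * t * (c ^ 2 + t ^ 2 - t * x))
      (c ^ 2 * t * (c ^ 2 + t ^ 2) - 2 * c ^ 2 * t ^ 2 * s) s := by
    have h := (((hasDerivAt_id s).const_mul (c ^ 2)).mul_const t).fun_mul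
      (((hasDerivAt_id s).const_mul t).const_sub (c ^ 2 + t ^ 2))
    refine h.congr_deriv ?_; (try simp only [id_eq]); ring
  have h := hg.sqrt (ne_of_gt (g_pos hc hs hst))
  exact h

lemma hasDerivAt_r_t {c t s : ℝ} (hc : 0 < c) (hs : 0 < s) (hst : s < t) :
    HasDerivAt (fun u => rEx c u s)
      (c ^ 2 * s * (c ^ 2 + 3 * t ^ 2 - 2 * t * s) / (2 * rEx c t s)) t := by
  have hg : HasDerivAt (fun u : ℝ => c ^ 2 * s * u * (c ^ 2 + u ^ 2 - u * s))
      (c ^ 2 * s * (c ^ 2 + 3 * t ^ 2 - 2 * t * s)) t := by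
    have h := ((hasDerivAt_id t).const_mul (c ^ 2 * s)).fun_mul
      (((hasDerivAt_pow 2 t).const_add (c ^ 2)).fun_sub ((hasDerivAt_id t).mul_const s))
    refine h.congr_deriv ?_
    simp only [id_eq, pow_one]
    push_cast
    ring
  have h := hg.sqrt (ne_of_gt (g_pos hc hs hst))
  exact h

set_option maxHeartbeats 4000000 in
lemma hasDerivAt_Wcl_s {c t s : ℝ} (hc : 0 < c) (hs : 0 < s) (hst : s < t) :
    HasDerivAt (fun x => WclF c t x)
      (-((c ^ 2 + t ^ 2) * rEx c t s) / (2 * t * s ^ 2 * (c ^ 2 + t ^ 2 - t * s) ^ 2)) s := by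
  have ht : 0 < t := hs.trans hst
  have hA : (0:ℝ) < c ^ 2 + t ^ 2 := by positivity
  have hm := m_pos hc hs hst
  have hr := rEx_pos hc hs hst
  have hr2 := rEx_sq hc hs hst
  have hrs := hasDerivAt_r_s hc hs hst
  have hmd : HasDerivAt (fun x : ℝ => c ^ 2 + t ^ 2 - t * x) (-t) s := by
    have h := ((hasDerivAt_id s).const_mul t).const_sub (c ^ 2 + t ^ 2)
    refine h.congr_deriv ?_; (try simp only [id_eq]); ring
  have h1 : HasDerivAt (fun x : ℝ => (c ^ 2 + t ^ 2 - t * x) - t * x) (-t - t) s := by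
    have h := hmd.fun_sub ((hasDerivAt_id s).const_mul t)
    refine h.congr_deriv ?_; (try simp only [id_eq]); ring
  have h2 : HasDerivAt (fun x : ℝ => 2 * t ^ 2 * x * (c ^ 2 + t ^ 2 - t * x))
      (2 * t ^ 2 * (c ^ 2 + t ^ 2 - t * s) + 2 * t ^ 2 * s * (-t)) s := by
    have h := (((hasDerivAt_id s).const_mul (2 * t ^ 2)).fun_mul hmd)
    refine h.congr_deriv ?_; (try simp only [id_eq]); ring
  have hN := (hrs.fun_mul h1).fun_sub h2
  have hD : HasDerivAt (fun x : ℝ => t * x * (c ^ 2 + t ^ 2) * (c ^ 2 + t ^ 2 - t * x))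
      (t * (c ^ 2 + t ^ 2) * (c ^ 2 + t ^ 2 - t * s) + t * s * (c ^ 2 + t ^ 2) * (-t)) s := by
    have h := (((hasDerivAt_id s).const_mul t).mul_const (c ^ 2 + t ^ 2)).fun_mul hmd
    refine h.congr_deriv ?_; (try simp only [id_eq]); ring
  have hD0 : t * s * (c ^ 2 + t ^ 2) * (c ^ 2 + t ^ 2 - t * s) ≠ 0 := by positivity
  have h := hN.fun_div hD hD0
  refine h.congr_deriv ?_
  have hr0 : rEx c t s ≠ 0 := ne_of_gt hr
  have hs0 : s ≠ 0 := ne_of_gt hs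
  have ht0 : t ≠ 0 := ne_of_gt ht
  have hA0 : (c ^ 2 + t ^ 2) ≠ 0 := ne_of_gt hA
  have hm0 : (c ^ 2 + t ^ 2 - t * s) ≠ 0 := ne_of_gt hm
  set r := rEx c t s with hrd
  field_simp
  linear_combination (-1 * c ^ 4 + 4 * c ^ 2 * s * t + -2 * c ^ 2 * t ^ 2 + -4 * s ^ 2 * t ^ 2 + 4 * s * t ^ 3 + -1 * t ^ 4) * hr2

set_option maxHeartbeats 4000000 in
lemma hasDerivAt_Wcl_t {c t s : ℝ} (hc : 0 < c) (hs : 0 < s) (hst : s < t) :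
    HasDerivAt (fun u => WclF c u s)
      ((4 * t ^ 8 * s - 8 * t ^ 7 * s ^ 2 + 4 * t ^ 6 * s ^ 3 + 4 * t ^ 6 * s * c ^ 2
          - 4 * t ^ 4 * s ^ 3 * c ^ 2 - 4 * t ^ 4 * s * c ^ 4 + 8 * t ^ 3 * s ^ 2 * c ^ 4
          - 4 * t ^ 2 * s * c ^ 6
        + (-3 * t ^ 6 + 12 * t ^ 5 * s - 8 * t ^ 4 * s ^ 2 - 7 * t ^ 4 * c ^ 2
            + 12 * t ^ 3 * s * c ^ 2 - 5 * t ^ 2 * c ^ 4 - c ^ 6) * rEx c t s) /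
        (2 * s * t ^ 2 * (c ^ 2 + t ^ 2) ^ 2 * (c ^ 2 + t ^ 2 - t * s) ^ 2)) t := by
  have ht : 0 < t := hs.trans hst
  have hA : (0:ℝ) < c ^ 2 + t ^ 2 := by positivity
  have hm := m_pos hc hs hst
  have hr := rEx_pos hc hs hst
  have hr2 := rEx_sq hc hs hst
  have hrt := hasDerivAt_r_t hc hs hst
  have hmd : HasDerivAt (fun u : ℝ => c ^ 2 + u ^ 2 - u * s) (2 * t - s) t := by
    have h := ((hasDerivAt_pow 2 t).const_add (c ^ 2)).fun_sub ((hasDerivAt_id t).mul_const s)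
    refine h.congr_deriv ?_; (try simp only [id_eq, pow_one]); push_cast; ring
  have h1 : HasDerivAt (fun u : ℝ => (c ^ 2 + u ^ 2 - u * s) - u * s) (2 * t - s - s) t := by
    have h := hmd.fun_sub ((hasDerivAt_id t).mul_const s)
    refine h.congr_deriv ?_; (try simp only [id_eq]); ring
  have h2 : HasDerivAt (fun u : ℝ => 2 * u ^ 2 * s * (c ^ 2 + u ^ 2 - u * s))
      (4 * t * s * (c ^ 2 + t ^ 2 - t * s) + 2 * t ^ 2 * s * (2 * t - s)) t := by
    have h := (((hasDerivAt_pow 2 t).const_mul 2).mul_const s).fun_mul hmd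
    refine h.congr_deriv ?_; (try simp only [id_eq, pow_one]); push_cast; ring
  have hN := (hrt.fun_mul h1).fun_sub h2
  have hAd : HasDerivAt (fun u : ℝ => c ^ 2 + u ^ 2) (2 * t) t := by
    have h := (hasDerivAt_pow 2 t).const_add (c ^ 2)
    refine h.congr_deriv ?_; (try simp only [pow_one]); push_cast; ring
  have hD : HasDerivAt (fun u : ℝ => u * s * (c ^ 2 + u ^ 2) * (c ^ 2 + u ^ 2 - u * s))
      ((s * (c ^ 2 + t ^ 2) + t * s * (2 * t)) * (c ^ 2 + t ^ 2 - t * s)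
        + t * s * (c ^ 2 + t ^ 2) * (2 * t - s)) t := by
    have h := (((hasDerivAt_id t).mul_const s).fun_mul hAd).fun_mul hmd
    refine h.congr_deriv ?_; (try simp only [id_eq]); ring
  have hD0 : t * s * (c ^ 2 + t ^ 2) * (c ^ 2 + t ^ 2 - t * s) ≠ 0 := by positivity
  have h := hN.fun_div hD hD0
  refine h.congr_deriv ?_
  have hr0 : rEx c t s ≠ 0 := ne_of_gt hr
  have hs0 : s ≠ 0 := ne_of_gt hs
  have ht0 : t ≠ 0 := ne_of_gt ht
  have hA0 : (c ^ 2 + t ^ 2) ≠ 0 := ne_of_gt hA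
  have hm0 : (c ^ 2 + t ^ 2 - t * s) ≠ 0 := ne_of_gt hm
  set r := rEx c t s with hrd
  field_simp
  rw [div_left_inj' (show (c ^ 2 + t ^ 2 - s * t) ^ 2 ≠ 0 by rw [mul_comm s t]; exact pow_ne_zero 2 hm0)]
  linear_combination (-1 * c ^ 6 + 4 * c ^ 4 * s * t + -5 * c ^ 4 * t ^ 2 + -4 * c ^ 2 * s ^ 2 * t ^ 2 + 12 * c ^ 2 * s * t ^ 3 + -7 * c ^ 2 * t ^ 4 + -4 * s ^ 2 * t ^ 4 + 8 * s * t ^ 5 + -3 * t ^ 6) * hr2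

set_option maxHeartbeats 4000000 in
lemma hasDerivAt_Ucl_s {c t s : ℝ} (hc : 0 < c) (hs : 0 < s) (hst : s < t) :
    HasDerivAt (fun x => UclF c t x)
      ((c ^ 2 + t ^ 2) * rEx c t s / (2 * s * (c ^ 2 + t ^ 2 - t * s) ^ 2)) s := by
  have ht : 0 < t := hs.trans hst
  have hA : (0:ℝ) < c ^ 2 + t ^ 2 := by positivity
  have hm := m_pos hc hs hst
  have hr := rEx_pos hc hs hst
  have hr2 := rEx_sq hc hs hst
  have hrs := hasDerivAt_r_s hc hs hst
  have hmd : HasDerivAt (fun x : ℝ => c ^ 2 + t ^ 2 - t * x) (-t) s := by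
    have h := ((hasDerivAt_id s).const_mul t).const_sub (c ^ 2 + t ^ 2)
    refine h.congr_deriv ?_; (try simp only [id_eq]); ring
  have h := hrs.fun_div hmd (ne_of_gt hm)
  refine h.congr_deriv ?_
  have hr0 : rEx c t s ≠ 0 := ne_of_gt hr
  have hs0 : s ≠ 0 := ne_of_gt hs
  have ht0 : t ≠ 0 := ne_of_gt ht
  have hA0 : (c ^ 2 + t ^ 2) ≠ 0 := ne_of_gt hA
  have hm0 : (c ^ 2 + t ^ 2 - t * s) ≠ 0 := ne_of_gt hm
  set r := rEx c t s with hrd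
  field_simp
  linear_combination (-1 * c ^ 2 + 2 * s * t + -1 * t ^ 2) * hr2

set_option maxHeartbeats 4000000 in
theorem stmt13 (c : ℝ) (hc : 0 < c)
    (φ : ℝ → ℝ → ℝ)
    (hφ : ∀ t s : ℝ, φ t s =
      (Real.sqrt (t / (c ^ 2 + t ^ 2) - t ^ 2 * s / (c ^ 2 + t ^ 2) ^ 2) +
        Real.sqrt (c ^ 2 * s / (c ^ 2 + t ^ 2) ^ 2)) ^ 2)
    (t s : ℝ) (hs : 0 < s) (hst : s < t) :
    -(2 / φ t s) *
      (s * (dT (Wf φ) t s + dS (Wf φ) t s)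
        - s ^ 2 * (t - s) * (dS (Wf φ) t s) ^ 2 / dS (Uf φ) t s
        + Wf φ t s) = 4 := by
  have hφ' : φ = phiEx c := by
    funext u v; rw [hφ]; rfl
  subst hφ'
  have ht : 0 < t := hs.trans hst
  have hA : (0:ℝ) < c ^ 2 + t ^ 2 := by positivity
  have hm := m_pos hc hs hst
  have hr := rEx_pos hc hs hst
  -- glue for dS (Wf ...)
  have hevS : (Wf (phiEx c) t) =ᶠ[nhds s] (WclF c t) := by
    filter_upwards [Ioo_mem_nhds hs hst] with x hx
    exact W_eq hc hx.1 hx.2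
  have hdSW : dS (Wf (phiEx c)) t s = -((c ^ 2 + t ^ 2) * rEx c t s) /
      (2 * t * s ^ 2 * (c ^ 2 + t ^ 2 - t * s) ^ 2) := by
    rw [dS, hevS.deriv_eq]
    exact (hasDerivAt_Wcl_s hc hs hst).deriv
  have hevT : (fun u => Wf (phiEx c) u s) =ᶠ[nhds t] (fun u => WclF c u s) := by
    filter_upwards [Ioi_mem_nhds hst] with u hu
    exact W_eq hc hs hu
  have hdTW : dT (Wf (phiEx c)) t s = (4 * t ^ 8 * s - 8 * t ^ 7 * s ^ 2 + 4 * t ^ 6 * s ^ 3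
      + 4 * t ^ 6 * s * c ^ 2 - 4 * t ^ 4 * s ^ 3 * c ^ 2 - 4 * t ^ 4 * s * c ^ 4
      + 8 * t ^ 3 * s ^ 2 * c ^ 4 - 4 * t ^ 2 * s * c ^ 6
      + (-3 * t ^ 6 + 12 * t ^ 5 * s - 8 * t ^ 4 * s ^ 2 - 7 * t ^ 4 * c ^ 2
          + 12 * t ^ 3 * s * c ^ 2 - 5 * t ^ 2 * c ^ 4 - c ^ 6) * rEx c t s) /
      (2 * s * t ^ 2 * (c ^ 2 + t ^ 2) ^ 2 * (c ^ 2 + t ^ 2 - t * s) ^ 2) := by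
    rw [dT, hevT.deriv_eq]
    exact (hasDerivAt_Wcl_t hc hs hst).deriv
  have hevSU : (Uf (phiEx c) t) =ᶠ[nhds s] (UclF c t) := by
    filter_upwards [Ioo_mem_nhds hs hst] with x hx
    exact U_eq hc hx.1 hx.2
  have hdSU : dS (Uf (phiEx c)) t s = (c ^ 2 + t ^ 2) * rEx c t s /
      (2 * s * (c ^ 2 + t ^ 2 - t * s) ^ 2) := by
    rw [dS, hevSU.deriv_eq]
    exact (hasDerivAt_Ucl_s hc hs hst).deriv
  rw [hdSW, hdTW, hdSU, W_eq hc hs hst, WclF,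
    show phiEx c t s = (pEx c t s + qEx c t s) ^ 2 from rfl,
    pEx_eq hc hs hst, qEx_eq hc hs.le ht, rEx_eq hc hs hst]
  have ha := aEx_pos hc hs hst
  have hb := bEx_pos hc hs
  have ha2 := aEx_sq hc hs hst
  have hb2 := bEx_sq (c := c) hs.le
  set a := aEx c t s
  set b := bEx c s
  have hab : 0 < a + b := add_pos ha hb
  have ha0 : a ≠ 0 := ne_of_gt ha
  have hb0 : b ≠ 0 := ne_of_gt hb
  have hab0 : a + b ≠ 0 := ne_of_gt hab
  have hs0 : s ≠ 0 := ne_of_gt hs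
  have ht0 : t ≠ 0 := ne_of_gt ht
  have hA0 : (c ^ 2 + t ^ 2) ≠ 0 := ne_of_gt hA
  have hm0 : (c ^ 2 + t ^ 2 - t * s) ≠ 0 := ne_of_gt hm
  have hts : t - s ≠ 0 := ne_of_gt (sub_pos.2 hst)
  field_simp
  linear_combination (-4 * c ^ 4 * s * t ^ 2 + 8 * c ^ 2 * s ^ 2 * t ^ 3 + -8 * c ^ 2 * s * t ^ 4 + -4 * s ^ 3 * t ^ 4 + 8 * s ^ 2 * t ^ 5 + -4 * s * t ^ 6) * ha2 + (-4 * c ^ 4 * s * t ^ 2 + 8 * c ^ 2 * s ^ 2 * t ^ 3 + -8 * c ^ 2 * s * t ^ 4 + -4 * s ^ 3 * t ^ 4 + 8 * s ^ 2 * t ^ 5 + -4 * s * t ^ 6) * hb2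
end

section
/- Let f : (0,∞) → ℝ be smooth with f(t) > 0 and f′(t) > 0 for all t > 0, and let φ(t,s) = (√(f(t) + ((tf′(t)−f(t))/(2t))s) + √(((tf′(t)+f(t))/(2t))s))². Then on the region 0 < s < t (where the first square-root argument is positive) φ satisfies the strong pseudo-convexity conditions: φ − sφ_s > 0 and (φ − sφ_s)(φ + (t−s)φ_s) + s(t−s)φφ_ss > 0. -/
open Real

set_option maxHeartbeats 1000000 in
theorem stmt18 (f : ℝ → ℝ)
    (hf : ContDiffOn ℝ (⊤ : ℕ∞) f (Set.Ioi 0))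
    (hfpos : ∀ t : ℝ, 0 < t → 0 < f t)
    (hf'pos : ∀ t : ℝ, 0 < t → 0 < deriv f t)
    (φ : ℝ → ℝ → ℝ)
    (hφ : ∀ t s : ℝ, φ t s =
      (Real.sqrt (f t + (t * deriv f t - f t) / (2 * t) * s) +
        Real.sqrt ((t * deriv f t + f t) / (2 * t) * s)) ^ 2)
    (t s : ℝ) (hs : 0 < s) (hst : s < t)
    (h1 : 0 < f t + (t * deriv f t - f t) / (2 * t) * s)
    (h2 : 0 < (t * deriv f t + f t) / (2 * t) * s) :
    0 < φ t s - s * dS φ t s ∧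
    0 < (φ t s - s * dS φ t s) * (φ t s + (t - s) * dS φ t s)
        + s * (t - s) * φ t s * dS (dS φ) t s := by
  have ht : 0 < t := hs.trans hst
  set A : ℝ := f t with hAdef
  set B : ℝ := (t * deriv f t - f t) / (2 * t) with hBdef
  set C : ℝ := (t * deriv f t + f t) / (2 * t) with hCdef
  have hApos : 0 < A := hfpos t ht
  have hCpos : 0 < C := by
    have h' := hf'pos t ht
    have h'' := hfpos t ht
    rw [hCdef]; positivity
  have hrel : A * (t - s) = t * ((A + B * s) - C * s) := by
    rw [hAdef, hBdef, hCdef]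
    field_simp
    ring
  have hφ' : ∀ x : ℝ, φ t x = (Real.sqrt (A + B * x) + Real.sqrt (C * x)) ^ 2 :=
    fun x => hφ t x
  clear_value A B C
  clear hAdef hBdef hCdef hφ hf hfpos hf'pos
  have hu : 0 < A + B * s := h1
  have hv : 0 < C * s := h2
  set p : ℝ := Real.sqrt (A + B * s) with hpdef
  set q : ℝ := Real.sqrt (C * s) with hqdef
  have hp : 0 < p := Real.sqrt_pos.mpr hu
  have hq : 0 < q := Real.sqrt_pos.mpr hv
  have hp2 : p ^ 2 = A + B * s := Real.sq_sqrt hu.le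
  have hq2 : q ^ 2 = C * s := Real.sq_sqrt hv.le
  have hs' : s ≠ 0 := hs.ne'
  have hτ : (0:ℝ) < t - s := sub_pos.mpr hst
  have hB2 : B = (p ^ 2 - A) / s := by rw [hp2]; field_simp; ring
  have hC2 : C = q ^ 2 / s := by rw [hq2]; field_simp
  have hrel' : A * (t - s) = t * (p ^ 2 - q ^ 2) := by rw [hp2, hq2]; exact hrel
  have hpq : q < p := by
    have h2lt : q ^ 2 < p ^ 2 := by nlinarith [mul_pos hApos hτ]
    nlinarith [add_pos hp hq]
  -- derivative of φ t
  have hφt : φ t = fun x => (Real.sqrt (A + B * x) + Real.sqrt (C * x)) ^ 2 :=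
    funext hφ'
  set G : ℝ → ℝ := fun x => (Real.sqrt (A + B * x) + Real.sqrt (C * x)) *
      (B / Real.sqrt (A + B * x) + C / Real.sqrt (C * x)) with hGdef
  have hlin1 : ∀ x : ℝ, HasDerivAt (fun y => A + B * y) B x := by
    intro x
    simpa using ((hasDerivAt_id x).const_mul B).const_add A
  have hlin2 : ∀ x : ℝ, HasDerivAt (fun y => C * y) C x := by
    intro x
    simpa using (hasDerivAt_id x).const_mul C
  have hFderiv : ∀ x : ℝ, 0 < A + B * x → 0 < C * x →
      HasDerivAt (φ t) (G x) x := by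
    intro x hux hvx
    have hpu : Real.sqrt (A + B * x) ≠ 0 := (Real.sqrt_pos.mpr hux).ne'
    have hqv : Real.sqrt (C * x) ≠ 0 := (Real.sqrt_pos.mpr hvx).ne'
    have hsq1 := (hlin1 x).sqrt hux.ne'
    have hsq2 := (hlin2 x).sqrt hvx.ne'
    have hmain := (hsq1.add hsq2).pow 2
    simp only [Pi.add_apply] at hmain
    rw [hφt]
    refine hmain.congr_deriv ?_
    rw [hGdef]
    field_simp
    ring
  have hdS : dS φ t s = G s := by
    unfold dS
    exact (hFderiv s hu hv).deriv
  -- second derivative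
  have hopen : IsOpen {x : ℝ | 0 < A + B * x ∧ 0 < C * x} := by
    have o1 : IsOpen {x : ℝ | 0 < A + B * x} := isOpen_lt continuous_const (by fun_prop)
    have o2 : IsOpen {x : ℝ | 0 < C * x} := isOpen_lt continuous_const (by fun_prop)
    exact o1.inter o2
  have hev : (fun x => dS φ t x) =ᶠ[nhds s] G := by
    filter_upwards [hopen.mem_nhds ⟨hu, hv⟩] with x hx
    unfold dS
    exact (hFderiv x hx.1 hx.2).deriv
  have hGderiv : HasDerivAt G (-(A * C) ^ 2 / (2 * p ^ 3 * q ^ 3)) s := by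
    have hsq1 := (hlin1 s).sqrt hu.ne'
    have hsq2 := (hlin2 s).sqrt hv.ne'
    rw [← hpdef] at hsq1
    rw [← hqdef] at hsq2
    have hd1 : HasDerivAt (fun x => B / Real.sqrt (A + B * x))
        ((0 * p - B * (B / (2 * p))) / p ^ 2) s :=
      (hasDerivAt_const s B).div hsq1 hp.ne'
    have hd2 : HasDerivAt (fun x => C / Real.sqrt (C * x))
        ((0 * q - C * (C / (2 * q))) / q ^ 2) s :=
      (hasDerivAt_const s C).div hsq2 hq.ne'
    have hmain := (hsq1.add hsq2).mul (hd1.add hd2)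
    simp only [Pi.add_apply, Pi.mul_apply] at hmain
    rw [← hpdef, ← hqdef] at hmain
    rw [hGdef]
    refine hmain.congr_deriv ?_
    have key : A * C = C * p ^ 2 - B * q ^ 2 := by rw [hp2, hq2]; ring
    rw [key]
    field_simp
    ring
  have hdSS : dS (dS φ) t s = -(A * C) ^ 2 / (2 * p ^ 3 * q ^ 3) := by
    have h0 : dS (dS φ) t s = deriv (fun x => dS φ t x) s := rfl
    rw [h0, Filter.EventuallyEq.deriv_eq hev]
    exact hGderiv.deriv
  have hφts : φ t s = (p + q) ^ 2 := by rw [hpdef, hqdef]; exact hφ' s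
  have hGs : G s = (p + q) * (B / p + C / q) := by rw [hGdef, hpdef, hqdef]
  have hA2 : A = t * (p ^ 2 - q ^ 2) / (t - s) := by
    field_simp
    linarith [hrel']
  clear_value p q
  constructor
  · rw [hφts, hdS, hGs, hB2, hC2]
    have heq : (p + q) ^ 2 - s * ((p + q) * ((p ^ 2 - A) / s / p + q ^ 2 / s / q)) =
        A * (p + q) / p := by
      field_simp
      ring
    rw [heq]
    positivity
  · rw [hφts, hdS, hGs, hdSS, hB2, hC2, hA2]
    have hppos : (0:ℝ) < p ^ 2 - q ^ 2 := by nlinarith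
    have heq : ((p + q) ^ 2 - s * ((p + q) * ((p ^ 2 - t * (p ^ 2 - q ^ 2) / (t - s)) / s / p + q ^ 2 / s / q))) *
          ((p + q) ^ 2 + (t - s) * ((p + q) * ((p ^ 2 - t * (p ^ 2 - q ^ 2) / (t - s)) / s / p + q ^ 2 / s / q))) +
          s * (t - s) * (p + q) ^ 2 *
            (-(t * (p ^ 2 - q ^ 2) / (t - s) * (q ^ 2 / s)) ^ 2 / (2 * p ^ 3 * q ^ 3)) =
        (t * (p ^ 2 - q ^ 2) / (t - s)) * t * q * (p + q) ^ 4 / (2 * s * p ^ 3) := by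
      field_simp
      ring
    rw [heq]
    positivity
end
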